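/- arXiv:2404.14639 — 9 statements merged into one kernel-verified Lean document; each statement's English description precedes it below -/
import Mathlib

section
/- Let n : ℕ, β : ℝ, and set p = 1/(1 + exp β). Let C be a unitary matrix in Matrix (Fin n → Fin 2) (Fin n → Fin 2) ℂ, let H_NI be the diagonal matrix whose diagonal entry at x is the Hamming weight |x|, and let H = C * H_NI * Cᴴ be the parent Hamiltonian. Then the Gibbs state exp(-β • H) / trace(exp(-β • H)) equals C * D * Cᴴ, where D is the diagonal matrix whose diagonal entry at x is ∏_{i : Fin n} (if x i = 1 then p else 1 - p). In other words, the Gibbs state of the parent Hamiltonian at inverse temperature β is the output of the circuit C applied to an input in which each qubit is independently bit-flipped from |0⟩ with probability p = 1/(1 + exp β). -/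
/-!
Conjugation by a unitary commutes with the matrix exponential and preserves the trace, so the
Gibbs state of `C * H_NI * Cᴴ` is `C` times the Gibbs state of `H_NI` times `Cᴴ`. Since `H_NI`
is diagonal with entries `|x| = ∑ᵢ [xᵢ = 1]`, the Boltzmann weight `exp (-β |x|)` factorizes
over the qubits, and so does the partition function `(1 + exp (-β))ⁿ`; normalizing each factor
gives the bit-flip probabilities `p = exp (-β) / (1 + exp (-β))` and `1 - p = 1 / (1 + exp (-β))`.
-/

open Matrix NormedSpace

namespace Matrix

variable {m 𝔸 : Type*} [Fintype m] [DecidableEq m]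

theorem exp_unitary_conj [NormedCommRing 𝔸] [NormedAlgebra ℚ 𝔸] [CompleteSpace 𝔸] [StarRing 𝔸]
    {U : Matrix m m 𝔸} (hU : U ∈ unitaryGroup m 𝔸) (A : Matrix m m 𝔸) :
    exp (U * A * Uᴴ) = U * exp A * Uᴴ := by
  rw [← (inv_eq_left_inv hU.1 : U⁻¹ = Uᴴ), exp_conj U A (.of_mul_eq_one _ hU.2)]

theorem trace_unitary_conj [CommRing 𝔸] [StarRing 𝔸]
    {U : Matrix m m 𝔸} (hU : U ∈ unitaryGroup m 𝔸) (A : Matrix m m 𝔸) :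
    trace (U * A * Uᴴ) = trace A := by
  rw [trace_mul_cycle, ← star_eq_conjTranspose, hU.1, one_mul]

theorem trace_inv_smul_diagonal [Field 𝔸] (w : m → 𝔸) :
    (diagonal w).trace⁻¹ • diagonal w = diagonal fun x => w x / ∑ y, w y := by
  rw [trace_diagonal, ← diagonal_smul]
  congr 1
  funext x
  simp [div_eq_inv_mul]

end Matrix

theorem sum_prod_ite_fin_two {ι R : Type*} [Fintype ι] [DecidableEq ι] [CommSemiring R]
    (a b : R) :
    ∑ x : ι → Fin 2, ∏ i, (if x i = 1 then a else b) = (b + a) ^ Fintype.card ι := by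
  rw [← Fintype.prod_sum fun _ (j : Fin 2) => if j = 1 then a else b]
  simp

theorem prod_ite_div_pow_card {ι K : Type*} [Fintype ι] [Field K] (P : ι → Prop)
    [DecidablePred P] (a c : K) :
    (∏ i, if P i then a else 1) / c ^ Fintype.card ι = ∏ i, if P i then a / c else 1 / c := by
  rw [← Finset.card_univ, ← Finset.prod_const, ← Finset.prod_div_distrib]
  simp only [ite_div]

theorem Complex.exp_mul_card_filter {ι : Type*} [Fintype ι] (P : ι → Prop) [DecidablePred P]
    (t : ℂ) :
    Complex.exp (t * (Finset.univ.filter P).card) = ∏ i, if P i then Complex.exp t else 1 := by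
  rw [← Finset.prod_filter, Finset.prod_const, mul_comm, Complex.exp_nat_mul]

theorem exp_smul_diagonal_card_filter {ι : Type*} [Fintype ι] [DecidableEq ι] (t : ℝ) :
    exp (t • diagonal fun x : ι → Fin 2 => ((Finset.univ.filter fun i => x i = 1).card : ℂ)) =
      diagonal fun x => ∏ i, if x i = 1 then (Real.exp t : ℂ) else 1 := by
  rw [← diagonal_smul, exp_diagonal]
  congr 1
  funext x
  simp only [Pi.exp_def, Pi.smul_apply]
  rw [← Complex.exp_eq_exp_ℂ, Complex.real_smul, Complex.exp_mul_card_filter,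
    Complex.ofReal_exp]

theorem Real.one_div_one_add_exp_eq (β : ℝ) :
    1 / (1 + exp β) = exp (-β) / (1 + exp (-β)) := by
  have := exp_pos β
  rw [exp_neg]
  field_simp
  ring

theorem Real.one_sub_one_div_one_add_exp (β : ℝ) :
    1 - 1 / (1 + exp β) = 1 / (1 + exp (-β)) := by
  have := exp_pos β
  rw [exp_neg]
  field_simp
  ring

/-- The Gibbs state of the parent Hamiltonian `H = C * H_NI * Cᴴ` at inverse
temperature `β` is the output of the circuit `C` applied to an input where each
qubit is independently bit-flipped from `|0⟩` with probability `p = 1/(1 + exp β)`. -/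
theorem gibbs_parentHamiltonian_eq_noisy_circuit (n : ℕ) (β : ℝ) (p : ℝ)
    (hp : p = 1 / (1 + Real.exp β))
    (C : Matrix (Fin n → Fin 2) (Fin n → Fin 2) ℂ)
    (hC : C ∈ Matrix.unitaryGroup (Fin n → Fin 2) ℂ)
    (H_NI : Matrix (Fin n → Fin 2) (Fin n → Fin 2) ℂ)
    (hH : H_NI = Matrix.diagonal fun x =>
      ((Finset.univ.filter fun i => x i = 1).card : ℂ))
    (H : Matrix (Fin n → Fin 2) (Fin n → Fin 2) ℂ)
    (hHdef : H = C * H_NI * Cᴴ)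
    (D : Matrix (Fin n → Fin 2) (Fin n → Fin 2) ℂ)
    (hD : D = Matrix.diagonal (fun x : Fin n → Fin 2 =>
      ∏ i : Fin n, (if x i = 1 then (p : ℂ) else (1 - p : ℂ)))) :
    (NormedSpace.exp ((-β) • H)).trace⁻¹ • NormedSpace.exp ((-β) • H) =
      C * D * Cᴴ := by
  have hconj : (-β) • H = C * ((-β) • H_NI) * Cᴴ := by
    rw [hHdef, Matrix.mul_smul, Matrix.smul_mul]
  rw [hconj, exp_unitary_conj hC, trace_unitary_conj hC, ← Matrix.smul_mul, ← Matrix.mul_smul,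
    hH, exp_smul_diagonal_card_filter, trace_inv_smul_diagonal, sum_prod_ite_fin_two, hD]
  congr 3
  funext x
  rw [prod_ite_div_pow_card]
  refine Finset.prod_congr rfl fun i _ => ?_
  subst hp
  split_ifs
  · exact_mod_cast (Real.one_div_one_add_exp_eq β).symm
  · exact_mod_cast (Real.one_sub_one_div_one_add_exp β).symm
end

section
/- Let n : ℕ, β : ℝ, and set p = 1/(1 + exp β). Let C be a unitary matrix in Matrix (Fin n → Fin 2) (Fin n → Fin 2) ℂ, let H_NI be the diagonal matrix whose diagonal entry at x is the Hamming weight |x|, and let H = C * H_NI * Cᴴ. Then for every bit string x, the diagonal entry at (x,x) of the Gibbs state exp(-β • H) / trace(exp(-β • H)) equals ∑_{r : Fin n → Fin 2} (∏_{i} (if r i = 1 then p else 1 - p)) · ‖C x r‖², where ‖·‖² denotes the squared complex absolute value (normSq) of the matrix entry C x r. That is, the computational-basis measurement distribution of the Gibbs state is the output distribution of the circuit C on inputs drawn from independent Bernoulli(p) bit-flips of 0ⁿ. -/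
/-!
Conjugation by a unitary commutes with the matrix exponential and preserves the trace, so the
Gibbs state of `C * H_NI * Cᴴ` is `C` times the Gibbs state of the diagonal `H_NI` times `Cᴴ`,
and its diagonal entry at `x` is `∑ r, w r * ‖C x r‖²` with the Boltzmann weights
`w r = exp (-β |r|) / Z`. The Hamming weight is a sum over the bits, so `exp (-β |r|)`
factorizes and `Z = (1 + exp (-β))ⁿ`; hence `w r` is a product of the per-bit weights
`exp (-β) / (1 + exp (-β)) = p` and `1 / (1 + exp (-β)) = 1 - p`.
-/

open Matrix NormedSpace Finset

section UnitaryConj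

variable {ι 𝔸 : Type*} [Fintype ι] [DecidableEq ι]

theorem Matrix.trace_unitary_conj_s3 [CommRing 𝔸] [StarRing 𝔸] {U : Matrix ι ι 𝔸}
    (hU : U ∈ unitaryGroup ι 𝔸) (A : Matrix ι ι 𝔸) : trace (U * A * Uᴴ) = trace A :=
  trace_units_conj (Unitary.toUnits ⟨U, hU⟩) A

theorem Matrix.exp_unitary_conj_s3 [NormedCommRing 𝔸] [StarRing 𝔸] [NormedAlgebra ℚ 𝔸]
    [CompleteSpace 𝔸] {U : Matrix ι ι 𝔸} (hU : U ∈ unitaryGroup ι 𝔸) (A : Matrix ι ι 𝔸) :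
    exp (U * A * Uᴴ) = U * exp A * Uᴴ :=
  exp_units_conj (Unitary.toUnits ⟨U, hU⟩) A

theorem Matrix.mul_diagonal_mul_conjTranspose_apply_self (U : Matrix ι ι ℂ) (d : ι → ℝ)
    (x : ι) :
    (U * diagonal (fun r => (d r : ℂ)) * Uᴴ) x x =
      ((∑ r, d r * Complex.normSq (U x r) : ℝ) : ℂ) := by
  rw [mul_apply]
  push_cast
  refine Finset.sum_congr rfl fun r _ => ?_
  rw [mul_diagonal, conjTranspose_apply, Complex.star_def, Complex.normSq_eq_conj_mul_self]
  ring

end UnitaryConj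

section Gibbs

variable {ι : Type*} [Fintype ι] [DecidableEq ι]

noncomputable def gibbsState (β : ℝ) (H : Matrix ι ι ℂ) : Matrix ι ι ℂ :=
  (exp ((-β) • H)).trace⁻¹ • exp ((-β) • H)

theorem gibbsState_unitary_conj (β : ℝ) {U : Matrix ι ι ℂ} (hU : U ∈ unitaryGroup ι ℂ)
    (A : Matrix ι ι ℂ) : gibbsState β (U * A * Uᴴ) = U * gibbsState β A * Uᴴ := by
  have hconj : (-β) • (U * A * Uᴴ) = U * ((-β) • A) * Uᴴ := by
    rw [Matrix.mul_smul, Matrix.smul_mul]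
  rw [gibbsState, gibbsState, hconj, exp_unitary_conj_s3 hU, trace_unitary_conj_s3 hU,
    Matrix.mul_smul, Matrix.smul_mul]

theorem gibbsState_diagonal (β : ℝ) (E : ι → ℝ) :
    gibbsState β (diagonal fun i => (E i : ℂ)) =
      diagonal fun i => ((Real.exp (-β * E i) / ∑ j, Real.exp (-β * E j) : ℝ) : ℂ) := by
  have hsmul :
      (-β) • diagonal (fun i => (E i : ℂ)) = diagonal fun i => ((-β * E i : ℝ) : ℂ) := by
    rw [← diagonal_smul]; congr 1; ext i; simp [Complex.real_smul]
  have hexp : exp ((-β) • diagonal (fun i => (E i : ℂ))) =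
      diagonal fun i => ((Real.exp (-β * E i) : ℝ) : ℂ) := by
    rw [hsmul, exp_diagonal]
    congr 1; ext i
    rw [Pi.exp_def, ← Complex.exp_eq_exp_ℂ, Complex.ofReal_exp]
  rw [gibbsState, hexp, trace_diagonal, ← diagonal_smul]
  congr 1; ext i
  push_cast
  simp [div_eq_inv_mul]

end Gibbs

section Bernoulli

theorem Real.exp_neg_div_one_add_exp_neg (β : ℝ) :
    Real.exp (-β) / (1 + Real.exp (-β)) = 1 / (1 + Real.exp β) := by
  rw [Real.exp_neg]; field_simp; ring

theorem Real.one_div_one_add_exp_neg (β : ℝ) :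
    1 / (1 + Real.exp (-β)) = 1 - 1 / (1 + Real.exp β) := by
  rw [Real.exp_neg]; field_simp; ring

theorem exp_neg_mul_card_filter_eq_prod {ι : Type*} [Fintype ι] (β : ℝ) (r : ι → Fin 2) :
    Real.exp (-β * #{i | r i = 1}) = ∏ i, if r i = 1 then Real.exp (-β) else 1 := by
  rw [Finset.prod_ite, Finset.prod_const_one, mul_one, Finset.prod_const, ← Real.exp_nat_mul,
    mul_comm]

variable {ι κ : Type*} [Fintype ι] [DecidableEq ι] [Fintype κ]

theorem prod_div_sum_prod_eq_prod_div_sum (w : κ → ℝ) (r : ι → κ) :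
    (∏ i, w (r i)) / ∑ s : ι → κ, ∏ i, w (s i) = ∏ i, w (r i) / ∑ j, w j := by
  rw [← Fintype.prod_sum, Finset.prod_div_distrib]

theorem boltzmann_hammingWeight_eq_prod_bernoulli (β : ℝ) (r : ι → Fin 2) :
    Real.exp (-β * #{i | r i = 1}) / ∑ s : ι → Fin 2, Real.exp (-β * #{i | s i = 1}) =
      ∏ i, if r i = 1 then 1 / (1 + Real.exp β) else 1 - 1 / (1 + Real.exp β) := by
  have hsum : ∑ j : Fin 2, (if j = 1 then Real.exp (-β) else 1) = 1 + Real.exp (-β) := by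
    simp [Fin.sum_univ_two]
  simp_rw [exp_neg_mul_card_filter_eq_prod]
  rw [prod_div_sum_prod_eq_prod_div_sum (fun j : Fin 2 => if j = 1 then Real.exp (-β) else 1),
    hsum]
  refine Finset.prod_congr rfl fun i _ => ?_
  split_ifs
  · exact Real.exp_neg_div_one_add_exp_neg β
  · exact Real.one_div_one_add_exp_neg β

end Bernoulli

/-- The computational-basis measurement distribution of the Gibbs state of the
parent Hamiltonian `H = C * H_NI * Cᴴ` is the output distribution of the circuit `C`
on inputs drawn from independent Bernoulli(p) bit flips of `0ⁿ`, `p = 1/(1 + exp β)`. -/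
theorem gibbs_measurement_distribution (n : ℕ) (β : ℝ) (p : ℝ)
    (hp : p = 1 / (1 + Real.exp β))
    (C : Matrix (Fin n → Fin 2) (Fin n → Fin 2) ℂ)
    (hC : C ∈ Matrix.unitaryGroup (Fin n → Fin 2) ℂ)
    (H_NI : Matrix (Fin n → Fin 2) (Fin n → Fin 2) ℂ)
    (hH : H_NI = Matrix.diagonal fun x =>
      ((Finset.univ.filter fun i => x i = 1).card : ℂ))
    (H : Matrix (Fin n → Fin 2) (Fin n → Fin 2) ℂ)
    (hHdef : H = C * H_NI * Cᴴ) :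
    ∀ x : Fin n → Fin 2,
      ((NormedSpace.exp ((-β) • H)).trace⁻¹ • NormedSpace.exp ((-β) • H)) x x =
        ((∑ r : Fin n → Fin 2,
          (∏ i : Fin n, (if r i = 1 then p else 1 - p)) * Complex.normSq (C x r) : ℝ) : ℂ) := by
  intro x
  subst hp hHdef hH
  have hweight : (diagonal fun r : Fin n → Fin 2 => ((#{i | r i = 1} : ℕ) : ℂ)) =
      diagonal fun r => (((#{i | r i = 1} : ℕ) : ℝ) : ℂ) := by
    simp only [Complex.ofReal_natCast]
  change gibbsState β _ x x = _
  rw [hweight, gibbsState_unitary_conj β hC, gibbsState_diagonal,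
    mul_diagonal_mul_conjTranspose_apply_self]
  simp_rw [boltzmann_hammingWeight_eq_prod_bernoulli]
end

section
/- Let n : ℕ. Let Hn : Matrix (Fin n → Fin 2) (Fin n → Fin 2) ℂ be the n-qubit Hadamard transform, with entries Hn x y = (Real.sqrt 2)^{-n} · (-1)^{∑_i (x i : ℕ) · (y i : ℕ)}. Let D be any diagonal matrix in Matrix (Fin n → Fin 2) (Fin n → Fin 2) ℂ, and for i : Fin n let X_i be the bit-flip permutation matrix on coordinate i. Then the IQP unitary Hn * D * Hn commutes with X_i for every i: (Hn * D * Hn) * X_i = X_i * (Hn * D * Hn). Consequently, bit-flip errors on the input of an IQP circuit are equivalent to bit-flip errors on its output. -/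
open Matrix Finset Function

/-! Conjugation by the Hadamard transform `H` exchanges the bit flip `X_i` with the phase flip
`Z_i = diag ((-1) ^ x_i)`: `X_i H = H Z_i` and `H X_i = Z_i H`, because flipping bit `i` of `x`
changes the sign `(-1) ^ (x ⬝ z)` by `(-1) ^ z_i`. As `Z_i` commutes with the diagonal `D`,
`H D H X_i = H D Z_i H = H Z_i D H = X_i H D H`. -/

variable {R ι : Type*}

section BitFlip

variable [DecidableEq ι]

def bitFlip (i : ι) : Equiv.Perm (ι → Fin 2) :=
  Involutive.toPerm (fun x => update x i (1 - x i)) fun x => by simp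

lemma bitFlip_apply (i : ι) (x : ι → Fin 2) : bitFlip i x = update x i (1 - x i) := rfl

@[simp]
lemma bitFlip_symm (i : ι) : (bitFlip i).symm = bitFlip i := Involutive.toPerm_symm _

lemma permMatrix_bitFlip [Fintype ι] [Zero R] [One R] (i : ι) :
    (bitFlip i).permMatrix R =
      of fun x y : ι → Fin 2 => if y = update x i (1 - x i) then 1 else 0 := by
  ext x y
  simp [bitFlip_apply, eq_comm]

end BitFlip

section Walsh

variable [Fintype ι] [CommRing R]

variable (R ι) in
def walsh : Matrix (ι → Fin 2) (ι → Fin 2) R :=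
  of fun x y => (-1) ^ ∑ j, (x j : ℕ) * (y j : ℕ)

lemma walsh_apply_comm (x y : ι → Fin 2) : walsh R ι x y = walsh R ι y x := by
  simp only [walsh, of_apply, mul_comm]

variable [DecidableEq ι]

variable (R) in
def phaseFlip (i : ι) : Matrix (ι → Fin 2) (ι → Fin 2) R :=
  diagonal fun x => (-1) ^ (x i : ℕ)

lemma walsh_bitFlip_apply (i : ι) (x y : ι → Fin 2) :
    walsh R ι (bitFlip i x) y = (-1) ^ (y i : ℕ) * walsh R ι x y := by
  simp only [walsh, of_apply, ← prod_pow_eq_pow_sum]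
  rw [← mul_prod_erase _ _ (mem_univ i), ← mul_prod_erase _ _ (mem_univ i), ← mul_assoc]
  congr 1
  · simp only [bitFlip_apply, update_self]
    generalize x i = a; generalize y i = b
    fin_cases a <;> fin_cases b <;> simp
  · refine prod_congr rfl fun j hj => ?_
    rw [bitFlip_apply, update_of_ne (ne_of_mem_erase hj)]

lemma permMatrix_bitFlip_mul_walsh (i : ι) :
    (bitFlip i).permMatrix R * walsh R ι = walsh R ι * phaseFlip R i := by
  ext x y
  rw [PEquiv.toMatrix_toPEquiv_mul, submatrix_apply, phaseFlip, mul_diagonal, id,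
    walsh_bitFlip_apply, mul_comm]

lemma walsh_mul_permMatrix_bitFlip (i : ι) :
    walsh R ι * (bitFlip i).permMatrix R = phaseFlip R i * walsh R ι := by
  ext x y
  rw [PEquiv.mul_toMatrix_toPEquiv, submatrix_apply, phaseFlip, diagonal_mul, id, bitFlip_symm,
    walsh_apply_comm, walsh_bitFlip_apply, walsh_apply_comm]

lemma commute_walsh_mul_mul_walsh_permMatrix_bitFlip {D : Matrix (ι → Fin 2) (ι → Fin 2) R}
    (hD : D.IsDiag) (i : ι) :
    Commute (walsh R ι * D * walsh R ι) ((bitFlip i).permMatrix R) := by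
  have hDZ : Commute D (phaseFlip R i) := by
    rw [← hD.diagonal_diag]
    exact commute_diagonal _ _
  calc walsh R ι * D * walsh R ι * (bitFlip i).permMatrix R
      = walsh R ι * (D * phaseFlip R i) * walsh R ι := by
        rw [mul_assoc, walsh_mul_permMatrix_bitFlip, ← mul_assoc, mul_assoc (walsh R ι)]
    _ = (bitFlip i).permMatrix R * (walsh R ι * D * walsh R ι) := by
        rw [hDZ.eq, ← mul_assoc (walsh R ι), ← permMatrix_bitFlip_mul_walsh]
        simp only [mul_assoc]

end Walsh

/-- IQP unitaries `Hn * D * Hn` (with `Hn` the `n`-qubit Hadamard transform and `D`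
diagonal) commute with every single-qubit bit-flip `X_i`: bit-flip errors on the input
of an IQP circuit are equivalent to bit-flip errors on its output. -/
theorem iqp_commutes_with_bitflip (n : ℕ)
    (Hn : Matrix (Fin n → Fin 2) (Fin n → Fin 2) ℂ)
    (hHn : Hn = Matrix.of fun x y : Fin n → Fin 2 =>
      (((Real.sqrt 2) ^ n)⁻¹ : ℝ) *
        (-1 : ℂ) ^ (∑ i : Fin n, (x i : ℕ) * (y i : ℕ)))
    (D : Matrix (Fin n → Fin 2) (Fin n → Fin 2) ℂ) (hD : D.IsDiag)
    (i : Fin n)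
    (X : Matrix (Fin n → Fin 2) (Fin n → Fin 2) ℂ)
    (hX : X = Matrix.of fun x y : Fin n → Fin 2 =>
      if y = Function.update x i (1 - x i) then (1 : ℂ) else 0) :
    (Hn * D * Hn) * X = X * (Hn * D * Hn) := by
  obtain ⟨c, rfl⟩ : ∃ c : ℂ, Hn = c • walsh ℂ (Fin n) := ⟨_, hHn⟩
  rw [hX, ← permMatrix_bitFlip]
  simp only [Matrix.smul_mul, Matrix.mul_smul]
  rw [(commute_walsh_mul_mul_walsh_permMatrix_bitFlip hD i).eq]
end

section
/- Let n : ℕ and ρ, U : Matrix (Fin n → Fin 2) (Fin n → Fin 2) ℂ with U unitary. For S : Finset (Fin n), let X_S be the permutation matrix flipping all bits in S, and for p : ℝ define the n-qubit bit-flip channel N_p(ρ) := ∑_{S ⊆ Fin n} p^{|S|} (1-p)^{n-|S|} • (X_S * ρ * X_S). Suppose U commutes with X_{{i}} for every i : Fin n. Then for all p₁, p₂ ∈ [0,1], N_{p₂}(U * N_{p₁}(ρ) * Uᴴ) = U * N_q(ρ) * Uᴴ, where q = p₁(1-p₂) + p₂(1-p₁). That is, for circuits commuting with single-qubit bit flips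 (such as IQP circuits), independent input noise at rate p₁ combined with independent output noise at rate p₂ is equivalent to input noise alone at rate q. -/
open Matrix Finset
open scoped symmDiff

/-!
Bit flips compose by symmetric difference, `X_S X_T = X_{S ∆ T}`, so every `X_S` is a product of
single-qubit flips and commutes with `U` and `Uᴴ`; the output noise therefore passes through `U`
onto the input. There the two channels compose: the weight of `X_R` in `N_{p₂} ∘ N_{p₁}` is
`∑_T w_{p₂}(T) w_{p₁}(T ∆ R)`, which factors over the qubits because the weights are products of
single-qubit weights, and on one qubit two independent flips amount to a single flip with
probability `p₁(1-p₂) + p₂(1-p₁)`.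
-/

namespace BitFlip

variable {n : ℕ}

def flipBits (S : Finset (Fin n)) : Equiv.Perm (Fin n → Fin 2) :=
  Function.Involutive.toPerm (fun x i => if i ∈ S then 1 - x i else x i) fun x => by
    funext i; by_cases hi : i ∈ S <;> simp [hi]

theorem flipBits_apply (S : Finset (Fin n)) (x : Fin n → Fin 2) (i : Fin n) :
    flipBits S x i = if i ∈ S then 1 - x i else x i := rfl

theorem flipBits_mul_flipBits (S T : Finset (Fin n)) :
    flipBits T * flipBits S = flipBits (S ∆ T) := by
  ext x i
  by_cases hS : i ∈ S <;> by_cases hT : i ∈ T <;> simp [flipBits_apply, mem_symmDiff, hS, hT]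

@[simp]
theorem flipBits_empty : flipBits (∅ : Finset (Fin n)) = 1 := by
  ext x i
  simp [flipBits_apply]

@[simp]
theorem inv_flipBits (S : Finset (Fin n)) : (flipBits S)⁻¹ = flipBits S := by
  rw [inv_eq_iff_mul_eq_one, flipBits_mul_flipBits, symmDiff_self, bot_eq_empty, flipBits_empty]

section Matrix

variable (R : Type*)

def bitFlip [Zero R] [One R] (S : Finset (Fin n)) : Matrix (Fin n → Fin 2) (Fin n → Fin 2) R :=
  (flipBits S).permMatrix R

theorem of_flip_eq_bitFlip [Zero R] [One R] (S : Finset (Fin n)) :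
    (Matrix.of fun x y : Fin n → Fin 2 =>
      if (∀ i : Fin n, y i = if i ∈ S then 1 - x i else x i) then (1 : R) else 0) =
      bitFlip R S := by
  ext x y
  simp [bitFlip, PEquiv.toMatrix_apply, funext_iff, flipBits_apply, eq_comm]

theorem bitFlip_mul_bitFlip [NonAssocSemiring R] (S T : Finset (Fin n)) :
    bitFlip R S * bitFlip R T = bitFlip R (S ∆ T) := by
  rw [bitFlip, bitFlip, ← permMatrix_mul, flipBits_mul_flipBits, bitFlip]

@[simp]
theorem bitFlip_empty [Zero R] [One R] : bitFlip R (∅ : Finset (Fin n)) = 1 := by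
  simp [bitFlip]

@[simp]
theorem conjTranspose_bitFlip [NonAssocSemiring R] [StarRing R] (S : Finset (Fin n)) :
    (bitFlip R S)ᴴ = bitFlip R S := by
  simp [bitFlip]

variable {R}

theorem commute_bitFlip [Semiring R] {U : Matrix (Fin n → Fin 2) (Fin n → Fin 2) R}
    (hU : ∀ i, Commute U (bitFlip R {i})) (S : Finset (Fin n)) : Commute U (bitFlip R S) := by
  induction S using Finset.induction with
  | empty => simp
  | insert i S hi ih =>
    rw [insert_eq, ← sup_eq_union, ← (disjoint_singleton_left.2 hi).symmDiff_eq_sup,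
      ← bitFlip_mul_bitFlip]
    exact (hU i).mul_right ih

end Matrix

section Weight

variable {R : Type*} [CommRing R]

def flipWeight (p : R) (S : Finset (Fin n)) : R := p ^ #S * (1 - p) ^ (n - #S)

theorem flipWeight_eq_prod (p : R) (S : Finset (Fin n)) :
    flipWeight p S = ∏ i, if i ∈ S then p else 1 - p := by
  rw [prod_ite]
  simp [flipWeight, filter_not, ← compl_eq_univ_sdiff, card_compl]

theorem sum_flipWeight_mul_flipWeight_symmDiff (p₁ p₂ : R) (S : Finset (Fin n)) :
    ∑ T, flipWeight p₂ T * flipWeight p₁ (T ∆ S) =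
      flipWeight (p₁ * (1 - p₂) + p₂ * (1 - p₁)) S := by
  set a : Fin n → R := fun i => p₂ * if i ∈ S then 1 - p₁ else p₁
  set b : Fin n → R := fun i => (1 - p₂) * if i ∈ S then p₁ else 1 - p₁
  have hsplit (T : Finset (Fin n)) :
      flipWeight p₂ T * flipWeight p₁ (T ∆ S) = (∏ i ∈ T, a i) * ∏ i ∈ Tᶜ, b i := by
    calc flipWeight p₂ T * flipWeight p₁ (T ∆ S) = ∏ i, if i ∈ T then a i else b i := by
          rw [flipWeight_eq_prod, flipWeight_eq_prod, ← prod_mul_distrib]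
          refine prod_congr rfl fun i _ => ?_
          by_cases hT : i ∈ T <;> by_cases hS : i ∈ S <;> simp [a, b, hT, hS, mem_symmDiff]
      _ = (∏ i ∈ T, a i) * ∏ i ∈ Tᶜ, b i := by
          rw [prod_ite]
          simp [filter_not, ← compl_eq_univ_sdiff]
  calc ∑ T, flipWeight p₂ T * flipWeight p₁ (T ∆ S) = ∏ i, (a i + b i) := by
        simp only [hsplit, Fintype.prod_add]
    _ = _ := by
        rw [flipWeight_eq_prod]
        refine prod_congr rfl fun i _ => ?_
        by_cases hS : i ∈ S <;> simp only [a, b, hS, if_true, if_false] <;> ring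

end Weight

noncomputable def bitFlipChannel (p : ℝ) (σ : Matrix (Fin n → Fin 2) (Fin n → Fin 2) ℂ) :
    Matrix (Fin n → Fin 2) (Fin n → Fin 2) ℂ :=
  ∑ S : Finset (Fin n), flipWeight p S • (bitFlip ℂ S * σ * bitFlip ℂ S)

theorem bitFlipChannel_mul_mul (p : ℝ) {V W : Matrix (Fin n → Fin 2) (Fin n → Fin 2) ℂ}
    (hV : ∀ i, Commute V (bitFlip ℂ {i})) (hW : ∀ i, Commute W (bitFlip ℂ {i}))
    (σ : Matrix (Fin n → Fin 2) (Fin n → Fin 2) ℂ) :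
    bitFlipChannel p (V * σ * W) = V * bitFlipChannel p σ * W := by
  have hconj (S : Finset (Fin n)) :
      bitFlip ℂ S * (V * σ * W) * bitFlip ℂ S = V * (bitFlip ℂ S * σ * bitFlip ℂ S) * W := by
    rw [← mul_assoc, ← mul_assoc, ← (commute_bitFlip hV S).eq, mul_assoc _ W,
      (commute_bitFlip hW S).eq]
    simp only [mul_assoc]
  simp only [bitFlipChannel, mul_sum, sum_mul, Matrix.mul_smul, Matrix.smul_mul, hconj]

theorem bitFlipChannel_bitFlipChannel (p₁ p₂ : ℝ)
    (σ : Matrix (Fin n → Fin 2) (Fin n → Fin 2) ℂ) :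
    bitFlipChannel p₂ (bitFlipChannel p₁ σ) =
      bitFlipChannel (p₁ * (1 - p₂) + p₂ * (1 - p₁)) σ := by
  have hconj (T S : Finset (Fin n)) :
      bitFlip ℂ T * (bitFlip ℂ S * σ * bitFlip ℂ S) * bitFlip ℂ T =
        bitFlip ℂ (T ∆ S) * σ * bitFlip ℂ (T ∆ S) := by
    calc _ = bitFlip ℂ T * bitFlip ℂ S * σ * (bitFlip ℂ S * bitFlip ℂ T) := by
          simp only [mul_assoc]
      _ = _ := by rw [bitFlip_mul_bitFlip, bitFlip_mul_bitFlip, symmDiff_comm S T]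
  calc bitFlipChannel p₂ (bitFlipChannel p₁ σ)
      = ∑ T, ∑ S, (flipWeight p₂ T * flipWeight p₁ S) •
          (bitFlip ℂ (T ∆ S) * σ * bitFlip ℂ (T ∆ S)) := by
        simp only [bitFlipChannel, mul_sum, sum_mul, smul_sum, Matrix.mul_smul, Matrix.smul_mul,
          smul_smul, hconj]
    _ = ∑ T, ∑ S, (flipWeight p₂ T * flipWeight p₁ (T ∆ S)) •
          (bitFlip ℂ S * σ * bitFlip ℂ S) := by
        refine sum_congr rfl fun T _ => ?_
        exact Fintype.sum_bijective (T ∆ ·)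
          (Function.Involutive.bijective (symmDiff_symmDiff_cancel_left T)) _ _ fun S => by
            rw [symmDiff_symmDiff_cancel_left]
    _ = _ := by
        rw [sum_comm]
        simp only [← sum_smul, sum_flipWeight_mul_flipWeight_symmDiff]
        rfl

end BitFlip

open BitFlip in
theorem bitflip_noise_merge_general (n : ℕ)
    (ρ U : Matrix (Fin n → Fin 2) (Fin n → Fin 2) ℂ)
    (X : Finset (Fin n) → Matrix (Fin n → Fin 2) (Fin n → Fin 2) ℂ)
    (hX : ∀ S : Finset (Fin n), X S = Matrix.of fun x y : Fin n → Fin 2 =>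
      if (∀ i : Fin n, y i = if i ∈ S then 1 - x i else x i) then (1 : ℂ) else 0)
    (hcomm : ∀ i : Fin n, U * X {i} = X {i} * U)
    (N : ℝ → Matrix (Fin n → Fin 2) (Fin n → Fin 2) ℂ →
      Matrix (Fin n → Fin 2) (Fin n → Fin 2) ℂ)
    (hN : ∀ (p : ℝ) (σ : Matrix (Fin n → Fin 2) (Fin n → Fin 2) ℂ),
      N p σ = ∑ S : Finset (Fin n),
        (p ^ S.card * (1 - p) ^ (n - S.card)) • (X S * σ * X S))
    (p₁ p₂ : ℝ) :
    N p₂ (U * N p₁ ρ * Uᴴ) = U * N (p₁ * (1 - p₂) + p₂ * (1 - p₁)) ρ * Uᴴ := by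
  obtain rfl : X = bitFlip ℂ := funext fun S => (hX S).trans (of_flip_eq_bitFlip ℂ S)
  obtain rfl : N = bitFlipChannel := funext₂ hN
  have hcomm_star (i : Fin n) : Commute Uᴴ (bitFlip ℂ {i}) := by
    simpa only [star_eq_conjTranspose, conjTranspose_bitFlip] using Commute.star_star (hcomm i)
  rw [bitFlipChannel_mul_mul p₂ hcomm hcomm_star, bitFlipChannel_bitFlipChannel]

/-- For a unitary `U` commuting with every single-qubit bit flip (e.g. an IQP circuit),
independent bit-flip input noise at rate `p₁` followed by `U` and independent bit-flip
output noise at rate `p₂` is equivalent to input noise alone at rate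
`q = p₁(1-p₂) + p₂(1-p₁)`. -/
theorem bitflip_noise_merge (n : ℕ)
    (ρ U : Matrix (Fin n → Fin 2) (Fin n → Fin 2) ℂ)
    (hU : U ∈ Matrix.unitaryGroup (Fin n → Fin 2) ℂ)
    (X : Finset (Fin n) → Matrix (Fin n → Fin 2) (Fin n → Fin 2) ℂ)
    (hX : ∀ S : Finset (Fin n), X S = Matrix.of fun x y : Fin n → Fin 2 =>
      if (∀ i : Fin n, y i = if i ∈ S then 1 - x i else x i) then (1 : ℂ) else 0)
    (hcomm : ∀ i : Fin n, U * X {i} = X {i} * U)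
    (N : ℝ → Matrix (Fin n → Fin 2) (Fin n → Fin 2) ℂ →
      Matrix (Fin n → Fin 2) (Fin n → Fin 2) ℂ)
    (hN : ∀ (p : ℝ) (σ : Matrix (Fin n → Fin 2) (Fin n → Fin 2) ℂ),
      N p σ = ∑ S : Finset (Fin n),
        (p ^ S.card * (1 - p) ^ (n - S.card)) • (X S * σ * X S))
    (p₁ p₂ : ℝ) (hp₁ : p₁ ∈ Set.Icc (0 : ℝ) 1) (hp₂ : p₂ ∈ Set.Icc (0 : ℝ) 1) :
    N p₂ (U * N p₁ ρ * Uᴴ) = U * N (p₁ * (1 - p₂) + p₂ * (1 - p₁)) ρ * Uᴴ :=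
  bitflip_noise_merge_general n ρ U X hX hcomm N hN p₁ p₂
end

section
/- Let β : ℝ with β ≥ 0, and define the Glauber weights γ(ν) = 1/(1 + exp(-β·ν)) for ν ∈ {-1,0,1}, and m = (γ(1) + γ(-1))/2 + γ(0). Let K : Matrix (Fin 4) (Fin 4) ℝ be the symmetric matrix K = (1/2) • !![γ(1), 0, 0, -√(γ(1)·γ(-1)); 0, m, 0, 0; 0, 0, m, 0; -√(γ(1)·γ(-1)), 0, 0, γ(-1)]. Then: (a) K is positive semidefinite; (b) the vector v = (√(γ(-1)), 0, 0, √(γ(1))) satisfies K.mulVec v = 0; and (c) for every w : Fin 4 → ℝ orthogonal to v (i.e., w ⬝ᵥ v = 0), one has w ⬝ᵥ (K.mulVec w) ≥ (1/4) · (w ⬝ᵥ w). In particular the spectral gap of the single-qubit discriminant is at least 1/4. -/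
/-!
Since `γ ν + γ (-ν) = 1` and `γ 0 = 1/2`, we have `m = 1`, and with `s = √γ(1)`, `t = √γ(-1)`
(so `s² + t² = 1`) the quadratic form of `K` is `½ ((s x₀ - t x₃)² + x₁² + x₂²)`. It vanishes
at `v = (t, 0, 0, s)`, and for `w ⊥ v` Lagrange's identity
`(s w₀ - t w₃)² + (t w₀ + s w₃)² = (s² + t²)(w₀² + w₃²)` turns it into `½ ‖w‖²`.
-/

open Matrix

noncomputable def glauber (β ν : ℝ) : ℝ := 1 / (1 + Real.exp (-β * ν))

lemma glauber_nonneg (β ν : ℝ) : 0 ≤ glauber β ν := by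
  unfold glauber; positivity

lemma glauber_zero (β : ℝ) : glauber β 0 = 1 / 2 := by
  norm_num [glauber]

lemma glauber_add_glauber_neg (β ν : ℝ) : glauber β ν + glauber β (-ν) = 1 := by
  have hexp : Real.exp (-β * -ν) = (Real.exp (-β * ν))⁻¹ := by
    rw [← Real.exp_neg]; ring_nf
  have hpos := Real.exp_pos (-β * ν)
  unfold glauber
  rw [hexp]
  field_simp
  ring

noncomputable def qubitDiscriminant (s t : ℝ) : Matrix (Fin 4) (Fin 4) ℝ :=
  (1 / 2 : ℝ) • !![s ^ 2, 0, 0, -(s * t); 0, 1, 0, 0; 0, 0, 1, 0; -(s * t), 0, 0, t ^ 2]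

namespace qubitDiscriminant

variable (s t : ℝ)

lemma isHermitian : (qubitDiscriminant s t).IsHermitian := by
  ext i j
  fin_cases i <;> fin_cases j <;> simp [qubitDiscriminant]

lemma dotProduct_mulVec (x : Fin 4 → ℝ) :
    x ⬝ᵥ qubitDiscriminant s t *ᵥ x = ((s * x 0 - t * x 3) ^ 2 + x 1 ^ 2 + x 2 ^ 2) / 2 := by
  simp [qubitDiscriminant, Matrix.mulVec, dotProduct, Fin.sum_univ_four]
  ring

lemma posSemidef : (qubitDiscriminant s t).PosSemidef :=
  .of_dotProduct_mulVec_nonneg (isHermitian s t) fun x => by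
    rw [star_trivial, dotProduct_mulVec]; positivity

lemma mulVec_gibbs : qubitDiscriminant s t *ᵥ ![t, 0, 0, s] = 0 := by
  funext i
  fin_cases i <;> simp [qubitDiscriminant, Matrix.mulVec, dotProduct, Fin.sum_univ_four] <;> ring

lemma dotProduct_mulVec_of_orthogonal (hst : s ^ 2 + t ^ 2 = 1) {w : Fin 4 → ℝ}
    (hw : w ⬝ᵥ ![t, 0, 0, s] = 0) :
    w ⬝ᵥ qubitDiscriminant s t *ᵥ w = (w ⬝ᵥ w) / 2 := by
  have hw' : t * w 0 + s * w 3 = 0 := by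
    simp [dotProduct, Fin.sum_univ_four] at hw; linarith
  have lagrange : (s * w 0 - t * w 3) ^ 2 = w 0 ^ 2 + w 3 ^ 2 := by
    linear_combination (w 0 ^ 2 + w 3 ^ 2) * hst - (t * w 0 + s * w 3) * hw'
  rw [dotProduct_mulVec, lagrange]
  simp only [dotProduct, Fin.sum_univ_four]
  ring

end qubitDiscriminant

theorem single_qubit_discriminant_gap_general (β : ℝ)
    (γ : ℝ → ℝ) (hγ : ∀ ν : ℝ, γ ν = 1 / (1 + Real.exp (-β * ν)))
    (m : ℝ) (hm : m = (γ 1 + γ (-1)) / 2 + γ 0)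
    (K : Matrix (Fin 4) (Fin 4) ℝ)
    (hK : K = (1 / 2 : ℝ) •
      !![γ 1, 0, 0, -Real.sqrt (γ 1 * γ (-1));
         0, m, 0, 0;
         0, 0, m, 0;
         -Real.sqrt (γ 1 * γ (-1)), 0, 0, γ (-1)])
    (v : Fin 4 → ℝ) (hv : v = ![Real.sqrt (γ (-1)), 0, 0, Real.sqrt (γ 1)]) :
    K.PosSemidef ∧ K.mulVec v = 0 ∧
      ∀ w : Fin 4 → ℝ, w ⬝ᵥ v = 0 → w ⬝ᵥ K.mulVec w ≥ (1 / 4) * (w ⬝ᵥ w) := by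
  obtain rfl : γ = glauber β := funext hγ
  have hsum := glauber_add_glauber_neg β 1
  have hs := Real.sq_sqrt (glauber_nonneg β 1)
  have ht := Real.sq_sqrt (glauber_nonneg β (-1))
  have hK' : K = qubitDiscriminant √(glauber β 1) √(glauber β (-1)) := by
    rw [hK, hm, glauber_zero, hsum, Real.sqrt_mul (glauber_nonneg β 1), qubitDiscriminant,
      hs, ht]
    norm_num
  subst hK' hv
  refine ⟨qubitDiscriminant.posSemidef _ _, qubitDiscriminant.mulVec_gibbs _ _,
    fun w hw => ?_⟩
  have hww : 0 ≤ w ⬝ᵥ w := by simpa using dotProduct_self_star_nonneg w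
  rw [qubitDiscriminant.dotProduct_mulVec_of_orthogonal _ _ (by rw [hs, ht, hsum]) hw]
  linarith

/-- The vectorized discriminant of the single-qubit Davies generator with Glauber
weights is PSD, annihilates the purified Gibbs vector, and has spectral gap at
least `1/4` on the orthogonal complement of that vector. -/
theorem single_qubit_discriminant_gap (β : ℝ) (hβ : 0 ≤ β)
    (γ : ℝ → ℝ) (hγ : ∀ ν : ℝ, γ ν = 1 / (1 + Real.exp (-β * ν)))
    (m : ℝ) (hm : m = (γ 1 + γ (-1)) / 2 + γ 0)
    (K : Matrix (Fin 4) (Fin 4) ℝ)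
    (hK : K = (1 / 2 : ℝ) •
      !![γ 1, 0, 0, -Real.sqrt (γ 1 * γ (-1));
         0, m, 0, 0;
         0, 0, m, 0;
         -Real.sqrt (γ 1 * γ (-1)), 0, 0, γ (-1)])
    (v : Fin 4 → ℝ) (hv : v = ![Real.sqrt (γ (-1)), 0, 0, Real.sqrt (γ 1)]) :
    K.PosSemidef ∧ K.mulVec v = 0 ∧
      ∀ w : Fin 4 → ℝ, w ⬝ᵥ v = 0 → w ⬝ᵥ K.mulVec w ≥ (1 / 4) * (w ⬝ᵥ w) :=
  single_qubit_discriminant_gap_general β γ hγ m hm K hK v hv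
end

section
/- Let B : ℕ with B ≥ 1 and let p : ℝ with 0 ≤ p ≤ 1/2. Then the binomial upper tail satisfies ∑_{j = ⌈B/2⌉}^{B} (B.choose j) · p^j · (1-p)^{B-j} ≤ (4·p·(1-p))^{B/2}, where the right-hand side is a real power (Real.rpow) with exponent B/2. In probabilistic terms: the majority of B independent Bernoulli(p) bits is 1 with probability at most (4p(1-p))^{B/2}. -/
open Finset

/-- Binomial tail bound: the majority of `B` independent Bernoulli(`p`) bits is 1
with probability at most `(4p(1-p))^{B/2}`. -/
theorem binomial_tail_le_rpow (B : ℕ) (hB : 1 ≤ B) (p : ℝ)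
    (hp0 : 0 ≤ p) (hp : p ≤ 1 / 2) :
    ∑ j ∈ Finset.Icc (⌈(B : ℝ) / 2⌉₊) B,
        (B.choose j : ℝ) * p ^ j * (1 - p) ^ (B - j) ≤
      (4 * p * (1 - p)) ^ ((B : ℝ) / 2) := by
  set q := 1 - p with hq
  have hq0 : 0 ≤ q := by simp only [hq]; linarith
  have hpq : p ≤ q := by simp only [hq]; linarith
  have hpq0 : (0:ℝ) ≤ p * q := mul_nonneg hp0 hq0
  have key : ∀ j ∈ Finset.Icc (⌈(B : ℝ) / 2⌉₊) B,
      (B.choose j : ℝ) * p ^ j * q ^ (B - j) ≤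
        (B.choose j : ℝ) * (p * q) ^ ((B : ℝ) / 2) := by
    intro j hj
    rw [Finset.mem_Icc] at hj
    obtain ⟨hj1, hj2⟩ := hj
    have hB2j : B ≤ 2 * j := by
      have hcj : ((⌈(B : ℝ) / 2⌉₊ : ℝ)) ≤ (j : ℝ) := Nat.cast_le.mpr hj1
      have h1 : (B : ℝ) / 2 ≤ (j : ℝ) := le_trans (Nat.le_ceil _) hcj
      have : (B : ℝ) ≤ 2 * (j : ℝ) := by linarith
      exact_mod_cast this
    have hsq : (p ^ j * q ^ (B - j)) ^ 2 ≤ (p * q) ^ B := by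
      have h1 : (p ^ j * q ^ (B - j)) ^ 2 = p ^ (2 * j) * q ^ (2 * (B - j)) := by
        rw [mul_pow, ← pow_mul, ← pow_mul]; ring_nf
      set k := 2 * j - B with hk
      have hk1 : 2 * j = B + k := by omega
      have hk2 : 2 * (B - j) = B - k := by omega
      have hkB : k ≤ B := by omega
      rw [h1, hk1, hk2, pow_add]
      have h2 : p ^ k ≤ q ^ k := pow_le_pow_left₀ hp0 hpq k
      calc p ^ B * p ^ k * q ^ (B - k) ≤ p ^ B * q ^ k * q ^ (B - k) := by
            have : (0:ℝ) ≤ p ^ B := pow_nonneg hp0 B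
            have : (0:ℝ) ≤ q ^ (B - k) := pow_nonneg hq0 _
            gcongr
        _ = p ^ B * q ^ B := by
            have h3 : k + (B - k) = B := by omega
            rw [mul_assoc, ← pow_add, h3]
        _ = (p * q) ^ B := (mul_pow p q B).symm
    have hL0 : 0 ≤ p ^ j * q ^ (B - j) := mul_nonneg (pow_nonneg hp0 _) (pow_nonneg hq0 _)
    have hterm : p ^ j * q ^ (B - j) ≤ (p * q) ^ ((B : ℝ) / 2) := by
      calc p ^ j * q ^ (B - j) = Real.sqrt ((p ^ j * q ^ (B - j)) ^ 2) :=
            (Real.sqrt_sq hL0).symm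
        _ ≤ Real.sqrt ((p * q) ^ B) := Real.sqrt_le_sqrt hsq
        _ = (p * q) ^ ((B : ℝ) / 2) := by
            rw [Real.sqrt_eq_rpow, ← Real.rpow_natCast (p * q) B, ← Real.rpow_mul hpq0,
              show (B : ℝ) * (1 / 2) = (B : ℝ) / 2 from by ring]
    calc (B.choose j : ℝ) * p ^ j * q ^ (B - j)
        = (B.choose j : ℝ) * (p ^ j * q ^ (B - j)) := by ring
      _ ≤ (B.choose j : ℝ) * (p * q) ^ ((B : ℝ) / 2) := by
          apply mul_le_mul_of_nonneg_left hterm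
          positivity
  have hchoose : (∑ j ∈ Finset.Icc (⌈(B : ℝ) / 2⌉₊) B, (B.choose j : ℝ)) ≤ 2 ^ B := by
    have h1 : ∑ j ∈ Finset.Icc (⌈(B : ℝ) / 2⌉₊) B, B.choose j ≤
        ∑ j ∈ Finset.range (B + 1), B.choose j := by
      apply Finset.sum_le_sum_of_subset
      intro x hx
      rw [Finset.mem_Icc] at hx
      rw [Finset.mem_range]
      omega
    have h2 : ∑ j ∈ Finset.range (B + 1), B.choose j = 2 ^ B := Nat.sum_range_choose B
    calc (∑ j ∈ Finset.Icc (⌈(B : ℝ) / 2⌉₊) B, (B.choose j : ℝ))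
        = ((∑ j ∈ Finset.Icc (⌈(B : ℝ) / 2⌉₊) B, B.choose j : ℕ) : ℝ) := by push_cast; ring
      _ ≤ ((2 ^ B : ℕ) : ℝ) := by exact_mod_cast h1.trans_eq h2
      _ = 2 ^ B := by push_cast; ring
  have h4 : (4 : ℝ) ^ ((B : ℝ) / 2) = 2 ^ B := by
    have : (4 : ℝ) ^ ((B : ℝ) / 2) = ((4 : ℝ) ^ (B : ℝ)) ^ ((1:ℝ)/2) := by
      rw [← Real.rpow_mul (by norm_num)]; ring_nf
    rw [this, Real.rpow_natCast, ← Real.sqrt_eq_rpow]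
    rw [show (4:ℝ) ^ B = ((2:ℝ) ^ B) ^ 2 by rw [← pow_mul, mul_comm, pow_mul]; norm_num]
    exact Real.sqrt_sq (by positivity)
  calc ∑ j ∈ Finset.Icc (⌈(B : ℝ) / 2⌉₊) B, (B.choose j : ℝ) * p ^ j * q ^ (B - j)
      ≤ ∑ j ∈ Finset.Icc (⌈(B : ℝ) / 2⌉₊) B, (B.choose j : ℝ) * (p * q) ^ ((B : ℝ) / 2) :=
        Finset.sum_le_sum key
    _ = (∑ j ∈ Finset.Icc (⌈(B : ℝ) / 2⌉₊) B, (B.choose j : ℝ)) * (p * q) ^ ((B : ℝ) / 2) := by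
        rw [← Finset.sum_mul]
    _ ≤ 2 ^ B * (p * q) ^ ((B : ℝ) / 2) := by
        apply mul_le_mul_of_nonneg_right hchoose (Real.rpow_nonneg hpq0 _)
    _ = (4 * p * q) ^ ((B : ℝ) / 2) := by
        rw [mul_assoc, Real.mul_rpow (by norm_num) hpq0, h4]
end

section
/- Let k : ℕ with k ≥ 2 and let q : ℝ with 0 ≤ q < 1/2. For s : Fin k → Bool, let w(s) = ∏_{i : Fin k} (if s i then q else 1-q) be its i.i.d. Bernoulli(q) weight, and let the decoded bit be Maj(s) := decide (2 · card {i : Fin (k-1) | s i.castSucc ≠ s (Fin.last (k-1))} ≥ k - 1), the majority (ties broken towards true) of the k-1 bits s_i XOR s_k. Then the decoding failure probability satisfies ∑_{s : Fin k → Bool} w(s) · (if Maj(s) ≠ s (Fin.last (k-1)) then 1 else 0) ≤ (4·q·(1-q))^{(k-1)/2}, where the right-hand side is a real power with exponent (k-1)/2. That is, the repetition-code distillation gadget reconstructs the root bit from the k-1 leaf bits, failing with probability exponentially small in k. -/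
/-!
If majority decoding fails then, whatever the root bit, at least half of the `n = k - 1` leaf
bits are `1`. Since `q ≤ 1 - q`, the leaf weight `q ^ a * (1 - q) ^ (n - a)` with `n ≤ 2 a` is then
at most `(q (1 - q)) ^ (n / 2)`. Summing this bound over the `2 ^ n` leaf configurations and
the two root values, of total weight `q + (1 - q) = 1`, gives
`2 ^ n * (q (1 - q)) ^ (n / 2) = (4 q (1 - q)) ^ (n / 2)`.
-/

open Finset

theorem Fintype.sum_comp_eval {ι β M : Type*} [Fintype ι] [DecidableEq ι] [Fintype β]
    [DecidableEq β] [AddCommMonoid M] (i : ι) (f : β → M) :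
    ∑ s : ι → β, f (s i) = (Fintype.card β ^ (Fintype.card ι - 1)) • ∑ b, f b := by
  rw [← Fintype.sum_fiberwise' (fun s : ι → β => s i), smul_sum]
  refine Fintype.sum_congr _ _ fun b => ?_
  rw [sum_const, card_univ, Fintype.card_subtype, ← Fintype.piFinset_univ,
    Fintype.card_filter_piFinset_const_eq_of_mem _ _ (mem_univ b), card_univ]

theorem sq_pow_mul_pow_sub_le {R : Type*} [CommSemiring R] [PartialOrder R] [IsOrderedRing R]
    {x y : R} (hx : 0 ≤ x) (hxy : x ≤ y) {c n : ℕ} (hcn : c ≤ n) (hnc : n ≤ 2 * c) :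
    (x ^ c * y ^ (n - c)) ^ 2 ≤ (x * y) ^ n := by
  obtain ⟨b, rfl⟩ := Nat.exists_eq_add_of_le hcn
  obtain ⟨d, rfl⟩ := Nat.exists_eq_add_of_le (show b ≤ c by omega)
  calc (x ^ (b + d) * y ^ (b + d + b - (b + d))) ^ 2 = (x * y) ^ (2 * b) * (x * x) ^ d := by
        rw [Nat.add_sub_cancel_left]; ring
    _ ≤ (x * y) ^ (2 * b) * (x * y) ^ d := by
        gcongr
        exact pow_nonneg (mul_nonneg hx (hx.trans hxy)) _
    _ = (x * y) ^ (b + d + b) := by ring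

theorem Real.pow_mul_pow_sub_le_rpow {x y : ℝ} (hx : 0 ≤ x) (hxy : x ≤ y) {c n : ℕ}
    (hcn : c ≤ n) (hnc : n ≤ 2 * c) :
    x ^ c * y ^ (n - c) ≤ (x * y) ^ ((n : ℝ) / 2) := by
  have hy : 0 ≤ y := hx.trans hxy
  rw [div_eq_mul_inv, Real.rpow_natCast_mul (by positivity),
    Real.le_rpow_inv_iff_of_pos (by positivity) (by positivity) two_pos, Real.rpow_two]
  exact sq_pow_mul_pow_sub_le hx hxy hcn hnc

theorem Real.four_mul_rpow_half (x : ℝ) (hx : 0 ≤ x) (n : ℕ) :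
    (4 * x) ^ ((n : ℝ) / 2) = 2 ^ n * x ^ ((n : ℝ) / 2) := by
  rw [Real.mul_rpow (by norm_num) hx, div_eq_mul_inv, Real.rpow_natCast_mul (by norm_num),
    show (4 : ℝ) ^ n = (2 ^ n) ^ 2 by rw [← pow_mul, mul_comm, pow_mul]; norm_num,
    ← Real.rpow_natCast_mul (by positivity)]
  norm_num

section RepetitionGadget

variable {ι : Type*} [Fintype ι] [DecidableEq ι]

def bernoulliWeight (q : ℝ) (s : ι → Bool) : ℝ :=
  ∏ i, if s i then q else 1 - q

def majorityDecode (root : ι) (s : ι → Bool) : Bool :=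
  decide (Fintype.card ι - 1 ≤ 2 * #{i ∈ univ.erase root | s i ≠ s root})

theorem card_filter_erase_add_card_filter_erase_not (root : ι) (p : ι → Prop)
    [DecidablePred p] :
    #{i ∈ univ.erase root | p i} + #{i ∈ univ.erase root | ¬p i} = Fintype.card ι - 1 := by
  rw [card_filter_add_card_filter_not, card_erase_of_mem (mem_univ _), card_univ]

theorem bernoulliWeight_eq (q : ℝ) (root : ι) (s : ι → Bool) :
    bernoulliWeight q s = (if s root then q else 1 - q) *
      (q ^ #{i ∈ univ.erase root | s i} *
        (1 - q) ^ (Fintype.card ι - 1 - #{i ∈ univ.erase root | s i})) := by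
  have hsplit := card_filter_erase_add_card_filter_erase_not root (s · = true)
  rw [bernoulliWeight, ← mul_prod_erase univ _ (mem_univ root), prod_ite, prod_const, prod_const,
    ← hsplit, Nat.add_sub_cancel_left]

theorem le_two_mul_card_ones_of_majorityDecode_ne {root : ι} {s : ι → Bool}
    (h : majorityDecode root s ≠ s root) :
    Fintype.card ι - 1 ≤ 2 * #{i ∈ univ.erase root | s i} := by
  have hsplit := card_filter_erase_add_card_filter_erase_not root (s · = true)
  cases hr : s root <;>
    simp only [majorityDecode, hr, ne_eq, Bool.not_eq_false, Bool.not_eq_true, not_le,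
      decide_eq_true_eq, decide_eq_false_iff_not] at h hsplit <;>
    omega

theorem bernoulliWeight_mul_indicator_majorityDecode_ne_le {q : ℝ} (hq0 : 0 ≤ q) (hq : q < 1 / 2)
    (root : ι) (s : ι → Bool) :
    bernoulliWeight q s * (if majorityDecode root s ≠ s root then 1 else 0) ≤
      (if s root then q else 1 - q) * (q * (1 - q)) ^ (((Fintype.card ι - 1 : ℕ) : ℝ) / 2) := by
  have hroot : 0 ≤ if s root then q else 1 - q := by split_ifs <;> linarith
  by_cases hfail : majorityDecode root s ≠ s root
  · rw [if_pos hfail, mul_one, bernoulliWeight_eq q root]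
    gcongr
    refine Real.pow_mul_pow_sub_le_rpow hq0 (by linarith) ?_
      (le_two_mul_card_ones_of_majorityDecode_ne hfail)
    simpa [card_univ] using card_le_card (filter_subset (s · = true) (univ.erase root))
  · rw [if_neg hfail, mul_zero]
    have : 0 ≤ q * (1 - q) := mul_nonneg hq0 (by linarith)
    positivity

theorem sum_bernoulliWeight_majorityDecode_ne_le {q : ℝ} (hq0 : 0 ≤ q) (hq : q < 1 / 2)
    (root : ι) :
    ∑ s : ι → Bool, bernoulliWeight q s * (if majorityDecode root s ≠ s root then 1 else 0) ≤
      (4 * q * (1 - q)) ^ (((Fintype.card ι - 1 : ℕ) : ℝ) / 2) := by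
  calc _ ≤ ∑ s : ι → Bool, (if s root then q else 1 - q) *
          (q * (1 - q)) ^ (((Fintype.card ι - 1 : ℕ) : ℝ) / 2) :=
        sum_le_sum fun s _ => bernoulliWeight_mul_indicator_majorityDecode_ne_le hq0 hq root s
    _ = 2 ^ (Fintype.card ι - 1) * (q * (1 - q)) ^ (((Fintype.card ι - 1 : ℕ) : ℝ) / 2) := by
        rw [← sum_mul]
        congr 1
        exact (Fintype.sum_comp_eval root fun b : Bool => if b then q else 1 - q).trans (by simp)
    _ = _ := by
        rw [mul_assoc, Real.four_mul_rpow_half _ (mul_nonneg hq0 (by linarith))]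

end RepetitionGadget

/-- The repetition-code distillation gadget: given `k` i.i.d. Bernoulli(`q`) bits,
the majority of the `k-1` bits `s_i ⊕ s_root` fails to reconstruct the root bit with
probability at most `(4q(1-q))^{(k-1)/2}`. -/
theorem repetition_gadget_failure_probability (k : ℕ)
    (q : ℝ) (hq0 : 0 ≤ q) (hq : q < 1 / 2)
    (w : (Fin k → Bool) → ℝ)
    (hw : ∀ s : Fin k → Bool, w s = ∏ i : Fin k, (if s i then q else 1 - q))
    (root : Fin k)
    (Maj : (Fin k → Bool) → Bool)
    (hMaj : ∀ s : Fin k → Bool, Maj s = decide (k - 1 ≤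
      2 * (Finset.univ.filter fun i : Fin k => i ≠ root ∧ s i ≠ s root).card)) :
    ∑ s : Fin k → Bool, w s * (if Maj s ≠ s root then (1 : ℝ) else 0) ≤
      (4 * q * (1 - q)) ^ (((k : ℝ) - 1) / 2) := by
  have hw' : w = bernoulliWeight q := funext hw
  have hMaj' : Maj = majorityDecode root := funext fun s => by
    rw [hMaj, majorityDecode, Fintype.card_fin, ← filter_filter, filter_ne']
  have hk : ((k - 1 : ℕ) : ℝ) = (k : ℝ) - 1 := Nat.cast_pred root.pos
  simpa [hw', hMaj', hk] using sum_bernoulliWeight_majorityDecode_ne_le hq0 hq root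
end

section
/- Let n, r : ℕ with r ≥ 1 and let q : ℝ with 0 ≤ q ≤ 1/2. For e : Fin n → Fin r → Bool, let w(e) = ∏_{i,j} (if e i j then q else 1-q) be its i.i.d. Bernoulli(q) weight. Then ∑_{e : Fin n → Fin r → Bool} w(e) · (if ∃ i : Fin n, 2 · card {j : Fin r | e i j = true} ≥ r then 1 else 0) ≤ n · (4·q·(1-q))^{r/2}, where the right-hand side uses a real power with exponent r/2. That is, when each of n logical bits is protected by an r-fold repetition code with i.i.d. bit-flip errors of rate q, the probability that majority decoding fails on some block is at most n·(4q(1-q))^{r/2}. -/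
open Finset

private lemma rep_blockw_eq (r : ℕ) (q : ℝ) (f : Fin r → Bool) :
    (∏ j : Fin r, (if f j then q else 1 - q)) =
      q ^ (Finset.univ.filter fun j : Fin r => f j = true).card *
        (1 - q) ^ (r - (Finset.univ.filter fun j : Fin r => f j = true).card) := by
  classical
  rw [← Finset.prod_filter_mul_prod_filter_not Finset.univ (fun j => f j = true)]
  have h1 : ∀ j ∈ Finset.univ.filter (fun j : Fin r => f j = true),
      (if f j then q else 1 - q) = q := by
    intro j hj; simp at hj; simp [hj]
  have h2 : ∀ j ∈ Finset.univ.filter (fun j : Fin r => ¬ f j = true),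
      (if f j then q else 1 - q) = 1 - q := by
    intro j hj; simp at hj; simp [hj]
  have hcard : (Finset.univ.filter fun j : Fin r => ¬ f j = true).card
      = r - (Finset.univ.filter fun j : Fin r => f j = true).card := by
    have h := Finset.card_filter_add_card_filter_not
      (s := (Finset.univ : Finset (Fin r))) (p := fun j : Fin r => f j = true)
    simp only [Finset.card_univ, Fintype.card_fin] at h
    omega
  rw [Finset.prod_congr rfl h1, Finset.prod_congr rfl h2, Finset.prod_const,
    Finset.prod_const, hcard]

private lemma rep_key_bound (r k : ℕ) (hk : k ≤ r) (hrk : r ≤ 2 * k)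
    (q : ℝ) (hq0 : 0 ≤ q) (h1q : 0 ≤ 1 - q) (hq1 : q ≤ 1 - q) :
    q ^ k * (1 - q) ^ (r - k) ≤ Real.sqrt ((q * (1 - q)) ^ r) := by
  have hW0 : 0 ≤ q ^ k * (1 - q) ^ (r - k) := by positivity
  have hsq : (q ^ k * (1 - q) ^ (r - k)) ^ 2 ≤ (q * (1 - q)) ^ r := by
    have hW2 : (q ^ k * (1 - q) ^ (r - k)) ^ 2 =
        q ^ r * q ^ (2 * k - r) * (1 - q) ^ (r - (2 * k - r)) := by
      rw [mul_pow, ← pow_mul, ← pow_mul, show k * 2 = r + (2 * k - r) by omega,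
        show (r - k) * 2 = r - (2 * k - r) by omega, pow_add]
    have hrhs : (q * (1 - q)) ^ r =
        q ^ r * (1 - q) ^ (2 * k - r) * (1 - q) ^ (r - (2 * k - r)) := by
      rw [mul_pow, mul_assoc, ← pow_add, show 2 * k - r + (r - (2 * k - r)) = r by omega]
    rw [hW2, hrhs]
    have hqm : q ^ (2 * k - r) ≤ (1 - q) ^ (2 * k - r) :=
      pow_le_pow_left₀ hq0 hq1 _
    gcongr
  calc q ^ k * (1 - q) ^ (r - k)
      = Real.sqrt ((q ^ k * (1 - q) ^ (r - k)) ^ 2) := (Real.sqrt_sq hW0).symm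
    _ ≤ Real.sqrt ((q * (1 - q)) ^ r) := Real.sqrt_le_sqrt hsq

private lemma rep_block_bound (r : ℕ) (q : ℝ) (hq0 : 0 ≤ q) (h1q : 0 ≤ 1 - q)
    (hq1 : q ≤ 1 - q) :
    ∑ f : Fin r → Bool,
      (∏ j : Fin r, (if f j then q else 1 - q)) *
        (if r ≤ 2 * (Finset.univ.filter fun j : Fin r => f j = true).card
          then (1 : ℝ) else 0) ≤ 2 ^ r * Real.sqrt ((q * (1 - q)) ^ r) := by
  classical
  have hterm : ∀ f : Fin r → Bool,
      (∏ j : Fin r, (if f j then q else 1 - q)) *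
        (if r ≤ 2 * (Finset.univ.filter fun j : Fin r => f j = true).card
          then (1 : ℝ) else 0) ≤ Real.sqrt ((q * (1 - q)) ^ r) := by
    intro f
    split_ifs with h
    · rw [mul_one, rep_blockw_eq]
      exact rep_key_bound r _ ((Finset.card_filter_le _ _).trans_eq (by simp)) h
        q hq0 h1q hq1
    · rw [mul_zero]
      exact Real.sqrt_nonneg _
  calc ∑ f : Fin r → Bool, _ ≤ ∑ _f : Fin r → Bool, Real.sqrt ((q * (1 - q)) ^ r) :=
        Finset.sum_le_sum fun f _ => hterm f
    _ = 2 ^ r * Real.sqrt ((q * (1 - q)) ^ r) := by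
        rw [Finset.sum_const, Finset.card_univ]
        simp [Fintype.card_fun]

private lemma rep_block_sum_one (r : ℕ) (q : ℝ) :
    ∑ f : Fin r → Bool, (∏ j : Fin r, (if f j then q else 1 - q)) = 1 := by
  classical
  rw [← Fintype.prod_sum (fun (_ : Fin r) (b : Bool) => if b then q else 1 - q)]
  simp

/-- When each of `n` logical bits is protected by an `r`-fold repetition code with
i.i.d. bit-flip errors of rate `q`, the probability that majority decoding fails on
some block is at most `n·(4q(1-q))^{r/2}`. -/
theorem repetition_blocks_union_bound (n r : ℕ) (hr : 1 ≤ r)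
    (q : ℝ) (hq0 : 0 ≤ q) (hq : q ≤ 1 / 2)
    (w : (Fin n → Fin r → Bool) → ℝ)
    (hw : ∀ e : Fin n → Fin r → Bool,
      w e = ∏ i : Fin n, ∏ j : Fin r, (if e i j then q else 1 - q)) :
    ∑ e : Fin n → Fin r → Bool,
        w e * (if ∃ i : Fin n,
          r ≤ 2 * (Finset.univ.filter fun j : Fin r => e i j = true).card
          then (1 : ℝ) else 0) ≤
      (n : ℝ) * (4 * q * (1 - q)) ^ ((r : ℝ) / 2) := by
  classical
  have h1q : 0 ≤ 1 - q := by linarith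
  have hq1 : q ≤ 1 - q := by linarith
  set ind : Fin n → (Fin n → Fin r → Bool) → ℝ := fun i e =>
    (if r ≤ 2 * (Finset.univ.filter fun j : Fin r => e i j = true).card
      then (1 : ℝ) else 0) with hind
  have hind0 : ∀ (i : Fin n) (e : Fin n → Fin r → Bool), 0 ≤ ind i e := by
    intro i e
    rw [hind]
    dsimp only
    split_ifs <;> norm_num
  have hw0 : ∀ e, 0 ≤ w e := by
    intro e; rw [hw]
    apply Finset.prod_nonneg; intro i _
    apply Finset.prod_nonneg; intro j _
    split_ifs <;> assumption
  -- union bound on the indicator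
  have hub : ∀ e : Fin n → Fin r → Bool,
      (if ∃ i : Fin n,
        r ≤ 2 * (Finset.univ.filter fun j : Fin r => e i j = true).card
        then (1 : ℝ) else 0) ≤ ∑ i : Fin n, ind i e := by
    intro e
    split_ifs with h
    · obtain ⟨i, hi⟩ := h
      have h1 : ind i e = 1 := by rw [hind]; simp [hi]
      calc (1 : ℝ) = ind i e := h1.symm
        _ ≤ ∑ i : Fin n, ind i e :=
            Finset.single_le_sum (f := fun i => ind i e)
              (fun i _ => hind0 i e) (Finset.mem_univ i)
    · exact Finset.sum_nonneg fun i _ => hind0 i e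
  -- per-block sums
  have hblock : ∀ i₀ : Fin n,
      ∑ e : Fin n → Fin r → Bool, w e * ind i₀ e ≤
        2 ^ r * Real.sqrt ((q * (1 - q)) ^ r) := by
    intro i₀
    have hfact : ∑ e : Fin n → Fin r → Bool, w e * ind i₀ e =
        ∑ f : Fin r → Bool,
          (∏ j : Fin r, (if f j then q else 1 - q)) *
            (if r ≤ 2 * (Finset.univ.filter fun j : Fin r => f j = true).card
              then (1 : ℝ) else 0) := by
      have hstep : ∀ e : Fin n → Fin r → Bool, w e * ind i₀ e =
          ∏ i : Fin n, ((∏ j : Fin r, (if e i j then q else 1 - q)) *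
            (if i = i₀ then
              (if r ≤ 2 * (Finset.univ.filter fun j : Fin r => e i j = true).card
                then (1 : ℝ) else 0) else 1)) := by
        intro e
        rw [Finset.prod_mul_distrib, Finset.prod_ite_eq' Finset.univ i₀
          (fun i => (if r ≤ 2 * (Finset.univ.filter fun j : Fin r => e i j = true).card
            then (1 : ℝ) else 0))]
        simp [hw, hind]
      rw [Finset.sum_congr rfl (fun e _ => hstep e),
        ← Fintype.prod_sum (fun (i : Fin n) (f : Fin r → Bool) =>
          (∏ j : Fin r, (if f j then q else 1 - q)) *
            (if i = i₀ then
              (if r ≤ 2 * (Finset.univ.filter fun j : Fin r => f j = true).card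
                then (1 : ℝ) else 0) else 1))]
      rw [Finset.prod_eq_single i₀]
      · simp
      · intro i _ hi
        simp only [if_neg hi, mul_one]
        exact rep_block_sum_one r q
      · simp
    rw [hfact]
    exact rep_block_bound r q hq0 h1q hq1
  -- RHS rewriting
  have hrhs : (4 * q * (1 - q)) ^ ((r : ℝ) / 2) =
      2 ^ r * Real.sqrt ((q * (1 - q)) ^ r) := by
    have hs : (0 : ℝ) ≤ q * (1 - q) := mul_nonneg hq0 h1q
    rw [show (4 : ℝ) * q * (1 - q) = 4 * (q * (1 - q)) by ring,
      Real.mul_rpow (by norm_num) hs]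
    congr 1
    · rw [show ((r : ℝ) / 2) = (1 / 2) * (r : ℝ) by ring,
        Real.rpow_mul (by norm_num), ← Real.sqrt_eq_rpow,
        show (4 : ℝ) = 2 ^ 2 by norm_num, Real.sqrt_sq (by norm_num),
        Real.rpow_natCast]
    · rw [Real.sqrt_eq_rpow, ← Real.rpow_natCast (q * (1 - q)) r,
        ← Real.rpow_mul hs]
      congr 1
      ring
  calc ∑ e : Fin n → Fin r → Bool,
        w e * (if ∃ i : Fin n,
          r ≤ 2 * (Finset.univ.filter fun j : Fin r => e i j = true).card
          then (1 : ℝ) else 0)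
      ≤ ∑ e : Fin n → Fin r → Bool, w e * ∑ i : Fin n, ind i e := by
        apply Finset.sum_le_sum
        intro e _
        exact mul_le_mul_of_nonneg_left (hub e) (hw0 e)
    _ = ∑ i : Fin n, ∑ e : Fin n → Fin r → Bool, w e * ind i e := by
        simp_rw [Finset.mul_sum]
        rw [Finset.sum_comm]
    _ ≤ ∑ _i : Fin n, 2 ^ r * Real.sqrt ((q * (1 - q)) ^ r) :=
        Finset.sum_le_sum fun i _ => hblock i
    _ = (n : ℝ) * (4 * q * (1 - q)) ^ ((r : ℝ) / 2) := by
        rw [Finset.sum_const, Finset.card_univ, Fintype.card_fin, hrhs,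
          nsmul_eq_mul]
end

section
/- Let n : ℕ, β : ℝ with β > 0, and δ : ℝ with 0 < δ ≤ 1/2; set n_δ := Real.log (1/δ) / β. Define γ : ℤ → ℝ by γ(ω) = 1/(1 + exp(-β·ω)) and the truncation γ̃(ω) := if (ω:ℝ) > n_δ then 1, else if (ω:ℝ) < -n_δ then 0, else γ(ω). For g ∈ [0,1] let R(g) : Matrix (Fin 2) (Fin 2) ℝ := !![√g, -√(1-g); √(1-g), √g]. Let W and W_δ be the block-diagonal matrices over the index (Fin 2) × (Fin (2n+1)) given by W ((a,k),(b,k')) = if k = k' then (R(γ((k:ℤ)-n))) a b else 0, and W_δ defined identically with γ̃ in place of γ. Then the ℓ²-operator norm satisfies ‖W - W_δ‖ ≤ 8·n·√δ. That is, truncating the Boltzmann-weight filter outside the frequency window [-n_δ, n_δ] incurs error at most 8n√δ. -/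
open Matrix
open scoped Matrix.Norms.L2Operator Classical

/-!
`W - W_δ` is block diagonal, so its operator norm is at most the Frobenius norm, i.e. the
square root of the sum of the blockwise Frobenius norms squared. Since `(√x - √y)² ≤ |x - y|`,
the squared Frobenius distance between two rotation blocks `R g`, `R h` is at most `4 |g - h|`.
The truncation changes the logistic weight `γ = sigmoid (β ω)` only on the tails, where
`sigmoid x ≤ exp x` bounds the change by `δ`, and it leaves the block `ω = 0` untouched because
`n_δ ≥ 0`. Hence `‖W - W_δ‖ ≤ √(2n · 4δ) ≤ 8n√δ`.
-/

theorem Real.sq_sqrt_sub_sqrt_le_abs_sub (x y : ℝ) : (√x - √y) ^ 2 ≤ |x - y| := by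
  have hx := Real.sqrt_nonneg x
  have hy := Real.sqrt_nonneg y
  calc (√x - √y) ^ 2 ≤ |√x - √y| * |√x + √y| := by
        rw [← sq_abs, sq, abs_of_nonneg (add_nonneg hx hy)]
        gcongr
        exact abs_sub_le_of_nonneg_of_le hx (le_add_of_nonneg_right hy) hy
          (le_add_of_nonneg_left hx)
    _ = |max x 0 - max y 0| := by rw [← abs_mul, ← Real.sq_sqrt', ← Real.sq_sqrt']; ring_nf
    _ ≤ |x - y| := abs_max_sub_max_le_abs x y 0

theorem Real.sigmoid_le_exp (x : ℝ) : Real.sigmoid x ≤ Real.exp x :=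
  calc Real.sigmoid x = Real.sigmoid (-x) * Real.exp x := by
        simpa using (Real.sigmoid_mul_rexp_neg (-x)).symm
    _ ≤ Real.exp x := mul_le_of_le_one_left (Real.exp_nonneg x) (Real.sigmoid_le_one _)

theorem Real.sigmoid_le_of_le_log {x δ : ℝ} (hδ : 0 < δ) (hx : x ≤ Real.log δ) :
    Real.sigmoid x ≤ δ :=
  (Real.sigmoid_le_exp x).trans ((Real.exp_le_exp.2 hx).trans_eq (Real.exp_log hδ))

theorem abs_sigmoid_sub_truncation_le {β δ : ℝ} (hβ : 0 < β) (hδ : 0 < δ) (x : ℝ) :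
    |Real.sigmoid (β * x) -
        if x > Real.log (1 / δ) / β then 1
        else if x < -(Real.log (1 / δ) / β) then 0 else Real.sigmoid (β * x)| ≤ δ := by
  rw [one_div, Real.log_inv]
  split_ifs with hup hlow
  · rw [abs_sub_comm, abs_of_nonneg (sub_nonneg.2 (Real.sigmoid_le_one _)), ← Real.sigmoid_neg]
    refine Real.sigmoid_le_of_le_log hδ ?_
    have := (div_lt_iff₀ hβ).1 hup
    linarith
  · rw [sub_zero, abs_of_nonneg (Real.sigmoid_nonneg _)]
    refine Real.sigmoid_le_of_le_log hδ ?_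
    have := (lt_div_iff₀ hβ).1 (by simpa [neg_div] using hlow)
    linarith
  · simpa using hδ.le

theorem sum_sq_sqrtRotation_sub_le (g h : ℝ) :
    ∑ a, ∑ b, ((!![√g, -√(1 - g); √(1 - g), √g] - !![√h, -√(1 - h); √(1 - h), √h] :
      Matrix (Fin 2) (Fin 2) ℝ) a b) ^ 2 ≤ 4 * |g - h| := by
  have hdiag := Real.sq_sqrt_sub_sqrt_le_abs_sub g h
  have hoff := Real.sq_sqrt_sub_sqrt_le_abs_sub (1 - g) (1 - h)
  rw [show 1 - g - (1 - h) = -(g - h) by ring, abs_neg] at hoff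
  simp only [Matrix.sub_apply, of_apply, cons_val', cons_val_fin_one, Fin.sum_univ_two,
    cons_val_zero, cons_val_one, sub_neg_eq_add]
  linarith

theorem Fintype.sum_le_card_sub_one_mul {ι : Type*} [Fintype ι] {f : ι → ℝ} {c : ℝ} (i₀ : ι)
    (h₀ : f i₀ = 0) (hf : ∀ i, f i ≤ c) : ∑ i, f i ≤ (Fintype.card ι - 1) * c := by
  rw [← Finset.sum_erase_add _ _ (Finset.mem_univ i₀), h₀, add_zero]
  refine (Finset.sum_le_card_nsmul _ _ c fun i _ => hf i).trans_eq ?_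
  rw [nsmul_eq_mul, Finset.card_erase_of_mem (Finset.mem_univ _), Finset.card_univ,
    Nat.cast_pred (Fintype.card_pos_iff.2 ⟨i₀⟩)]

namespace Matrix

variable {m n o : Type*} [Fintype m] [Fintype n] [Fintype o]

theorem l2_opNorm_le_sqrt_sum_sq (A : Matrix m n ℝ) : ‖A‖ ≤ √(∑ i, ∑ j, A i j ^ 2) := by
  refine ContinuousLinearMap.opNorm_le_bound _ (Real.sqrt_nonneg _) fun x => ?_
  rw [EuclideanSpace.norm_eq, EuclideanSpace.norm_eq, ← Real.sqrt_mul (by positivity),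
    Finset.sum_mul]
  refine Real.sqrt_le_sqrt (Finset.sum_le_sum fun i _ => ?_)
  simpa [mulVec, dotProduct] using Finset.sum_mul_sq_le_sq_mul_sq _ (A i) x

variable [DecidableEq o]

theorem sum_sum_blockDiagonal_sq (M : o → Matrix m n ℝ) :
    ∑ p, ∑ q, blockDiagonal M p q ^ 2 = ∑ k, ∑ i, ∑ j, M k i j ^ 2 := by
  simp only [Fintype.sum_prod_type, blockDiagonal_apply', ite_pow, zero_pow two_ne_zero]
  rw [Finset.sum_comm]
  refine Finset.sum_congr rfl fun k _ => Finset.sum_congr rfl fun i _ => ?_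
  simp

theorem l2_opNorm_blockDiagonal_le (M : o → Matrix m n ℝ) :
    ‖blockDiagonal M‖ ≤ √(∑ k, ∑ i, ∑ j, M k i j ^ 2) :=
  (l2_opNorm_le_sqrt_sum_sq _).trans_eq (by rw [sum_sum_blockDiagonal_sq])

end Matrix

/-- Truncating the controlled Boltzmann-weight filter `W` outside the frequency
window `[-n_δ, n_δ]` (with `n_δ = log(1/δ)/β`) incurs an error of at most `8n√δ`
in ℓ²-operator norm. -/
theorem boltzmann_filter_truncation_error (n : ℕ) (β : ℝ) (hβ : 0 < β)
    (δ : ℝ) (hδ0 : 0 < δ) (hδ : δ ≤ 1 / 2)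
    (nδ : ℝ) (hnδ : nδ = Real.log (1 / δ) / β)
    (γ : ℤ → ℝ) (hγ : ∀ ω : ℤ, γ ω = 1 / (1 + Real.exp (-β * ω)))
    (γt : ℤ → ℝ)
    (hγt : ∀ ω : ℤ, γt ω =
      if (ω : ℝ) > nδ then 1 else if (ω : ℝ) < -nδ then 0 else γ ω)
    (R : ℝ → Matrix (Fin 2) (Fin 2) ℝ)
    (hR : ∀ g : ℝ, R g = !![Real.sqrt g, -Real.sqrt (1 - g);
                            Real.sqrt (1 - g), Real.sqrt g])
    (W Wδ : Matrix ((Fin 2) × (Fin (2 * n + 1))) ((Fin 2) × (Fin (2 * n + 1))) ℝ)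
    (hW : W = Matrix.of fun a b : (Fin 2) × (Fin (2 * n + 1)) =>
      if a.2 = b.2 then R (γ ((a.2 : ℤ) - n)) a.1 b.1 else 0)
    (hWδ : Wδ = Matrix.of fun a b : (Fin 2) × (Fin (2 * n + 1)) =>
      if a.2 = b.2 then R (γt ((a.2 : ℤ) - n)) a.1 b.1 else 0) :
    ‖W - Wδ‖ ≤ 8 * n * Real.sqrt δ := by
  have hγ_sub_γt : ∀ ω : ℤ, |γ ω - γt ω| ≤ δ := fun ω => by
    have hγσ : γ ω = Real.sigmoid (β * ω) := by rw [hγ, Real.sigmoid_def, one_div, neg_mul]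
    simpa only [hγt, hnδ, hγσ] using abs_sigmoid_sub_truncation_le hβ hδ0 ω
  have hγt_zero : γt 0 = γ 0 := by
    have : 0 ≤ nδ := hnδ ▸ div_nonneg (Real.log_nonneg (by rw [le_div_iff₀ hδ0]; linarith)) hβ.le
    simp [hγt, not_lt.2 this]
  set D : Fin (2 * n + 1) → Matrix (Fin 2) (Fin 2) ℝ :=
    fun k => R (γ ((k : ℤ) - n)) - R (γt ((k : ℤ) - n))
  have hblock : W - Wδ = blockDiagonal D := by
    ext ⟨i, k⟩ ⟨j, k'⟩
    by_cases h : k = k' <;> simp [hW, hWδ, blockDiagonal_apply', h, D]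
  have hD : ∀ k, ∑ i, ∑ j, D k i j ^ 2 ≤ 4 * δ := fun k => by
    simp only [D, hR]
    exact (sum_sq_sqrtRotation_sub_le _ _).trans (by linarith [hγ_sub_γt ((k : ℤ) - n)])
  have hsum : ∑ k, ∑ i, ∑ j, D k i j ^ 2 ≤ (2 * n) * (4 * δ) := by
    convert Fintype.sum_le_card_sub_one_mul (⟨n, by omega⟩ : Fin (2 * n + 1)) ?_ hD
    · simp
    · simp [D, hγt_zero]
  calc ‖W - Wδ‖ ≤ √((2 * n) * (4 * δ)) :=
        hblock ▸ (l2_opNorm_blockDiagonal_le D).trans (Real.sqrt_le_sqrt hsum)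
    _ = √(8 * n) * √δ := by rw [← Real.sqrt_mul (by positivity)]; ring_nf
    _ ≤ 8 * n * √δ := by
        gcongr
        rcases n.eq_zero_or_pos with rfl | hn
        · simp
        · exact Real.sqrt_le_self_iff.2 (Or.inr (by norm_cast; omega))
end
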